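/- arXiv:2402.10570 — 2 statements merged into one kernel-verified Lean document; each statement's English description precedes it below -/
import Mathlib

section
/- Let V be a real Hilbert space, Q a real Hilbert space, b : V × Q → ℝ continuous bilinear. For each q ∈ Q define the supremizer s(q) ∈ V as the Riesz representative of the functional v ↦ b(v,q). If Q_N ⊆ Q is a finite-dimensional subspace and V_N ⊆ V contains s(q) for every q ∈ Q_N, then the pair (V_N, Q_N) satisfies the inf–sup condition with constant β_N = inf_{q ∈ Q_N, q≠0} ‖s(q)‖_V / ‖q‖_Q, provided β_N > 0. -/
/-!
The supremizer `s q` realises the supremum defining the inf–sup quotient of `q`: since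
`b v q = ⟪s q, v⟫`, testing with `v = s q ∈ V_N` gives `sup_v b v q / ‖v‖ ≥ ‖s q‖`, and
`‖s q‖ ≥ β_N ‖q‖` by the definition of `β_N` as an infimum.
-/

open scoped RealInnerProductSpace

lemma iInf_div_norm_mul_norm_le {Q : Type*} [NormedAddCommGroup Q] (S : Set Q) {g : Q → ℝ}
    (hg : ∀ q, 0 ≤ g q) {q : Q} (hq : q ∈ S) :
    (⨅ x : {x : Q // x ∈ S ∧ x ≠ 0}, g x.1 / ‖x.1‖) * ‖q‖ ≤ g q := by
  rcases eq_or_ne q 0 with rfl | hq0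
  · simpa using hg 0
  have hbdd : BddBelow (Set.range fun x : {x : Q // x ∈ S ∧ x ≠ 0} => g x.1 / ‖x.1‖) :=
    ⟨0, by rintro _ ⟨x, rfl⟩; exact div_nonneg (hg _) (norm_nonneg _)⟩
  rw [← le_div_iff₀ (norm_pos_iff.mpr hq0)]
  exact ciInf_le hbdd ⟨q, hq, hq0⟩

lemma norm_le_iSup_inner_div_norm {V : Type*} [NormedAddCommGroup V] [InnerProductSpace ℝ V]
    (S : Set V) {w : V} (hw : w ∈ S) :
    ‖w‖ ≤ ⨆ v : {v : V // v ∈ S ∧ v ≠ 0}, ⟪w, v.1⟫ / ‖v.1‖ := by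
  rcases eq_or_ne w 0 with rfl | hw0
  · simp
  have hbdd : BddAbove (Set.range fun v : {v : V // v ∈ S ∧ v ≠ 0} => ⟪w, v.1⟫ / ‖v.1‖) := by
    refine ⟨‖w‖, ?_⟩
    rintro _ ⟨v, rfl⟩
    rw [div_le_iff₀ (norm_pos_iff.mpr v.2.2)]
    exact real_inner_le_norm w v.1
  have hself : ⟪w, w⟫ / ‖w‖ = ‖w‖ := by
    rw [real_inner_self_eq_norm_sq, sq, mul_div_cancel_right₀ _ (norm_ne_zero_iff.mpr hw0)]
  exact hself ▸ le_ciSup hbdd ⟨w, hw, hw0⟩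

theorem stmt4_general {V Q : Type*} [NormedAddCommGroup V] [InnerProductSpace ℝ V] [CompleteSpace V]
    [NormedAddCommGroup Q] [InnerProductSpace ℝ Q]
    (b : V →L[ℝ] Q →L[ℝ] ℝ)
    (s : Q → V) (hs : ∀ q : Q, s q = (InnerProductSpace.toDual ℝ V).symm (b.flip q))
    (QN : Submodule ℝ Q)
    (VN : Submodule ℝ V) (hsub : ∀ q ∈ QN, s q ∈ VN)
    (βN : ℝ) (hβN : βN = ⨅ q : {q : Q // q ∈ QN ∧ q ≠ 0}, ‖s q.1‖ / ‖q.1‖) :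
    ∀ q ∈ QN, βN * ‖q‖ ≤ ⨆ v : {v : V // v ∈ VN ∧ v ≠ 0}, b v.1 q / ‖v.1‖ := by
  intro q hq
  have hb : ∀ v, b v q = ⟪s q, v⟫ := fun v => by
    rw [hs, InnerProductSpace.toDual_symm_apply, ContinuousLinearMap.flip_apply]
  calc βN * ‖q‖ ≤ ‖s q‖ := hβN ▸ iInf_div_norm_mul_norm_le (QN : Set Q) (fun _ => norm_nonneg _) hq
    _ ≤ ⨆ v : {v : V // v ∈ VN ∧ v ≠ 0}, ⟪s q, v.1⟫ / ‖v.1‖ :=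
      norm_le_iSup_inner_div_norm (VN : Set V) (hsub q hq)
    _ = ⨆ v : {v : V // v ∈ VN ∧ v ≠ 0}, b v.1 q / ‖v.1‖ := by simp only [hb]

/-- Supremizer stabilization: let s(q) be the Riesz representative of v ↦ b(v,q).
If Q_N is finite-dimensional and V_N contains the supremizer s(q) of each q ∈ Q_N,
then (V_N, Q_N) satisfies the inf–sup condition with constant
β_N = inf_{q ∈ Q_N, q ≠ 0} ‖s(q)‖/‖q‖, provided β_N > 0. -/
theorem stmt4 {V Q : Type*} [NormedAddCommGroup V] [InnerProductSpace ℝ V] [CompleteSpace V]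
    [NormedAddCommGroup Q] [InnerProductSpace ℝ Q] [CompleteSpace Q]
    (b : V →L[ℝ] Q →L[ℝ] ℝ)
    (s : Q → V) (hs : ∀ q : Q, s q = (InnerProductSpace.toDual ℝ V).symm (b.flip q))
    (QN : Submodule ℝ Q) (hQN : FiniteDimensional ℝ QN)
    (VN : Submodule ℝ V) (hsub : ∀ q ∈ QN, s q ∈ VN)
    (βN : ℝ) (hβN : βN = ⨅ q : {q : Q // q ∈ QN ∧ q ≠ 0}, ‖s q.1‖ / ‖q.1‖)
    (hpos : 0 < βN) :
    ∀ q ∈ QN, βN * ‖q‖ ≤ ⨆ v : {v : V // v ∈ VN ∧ v ≠ 0}, b v.1 q / ‖v.1‖ :=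
  stmt4_general b s hs QN VN hsub βN hβN
end

section
/- Let H be a real Hilbert space and u₁, …, u_M ∈ H. For any N ≤ dim span{u₁,…,u_M}, there exists an orthonormal family (φ₁,…,φ_N) in H minimizing the quantity Σ_{m=1}^M ‖u_m − Σ_{n=1}^N ⟪u_m, φ_n⟫ φ_n‖² over all orthonormal families of size N in H, and the minimum value equals the sum of the M − N smallest eigenvalues (counted with multiplicity) of the correlation operator C : H → H, C v = Σ_{m=1}^M ⟪u_m, v⟫ u_m, restricted to span{u₁,…,u_M}. -/
open scoped RealInnerProductSpace


lemma pod_filter_eq (d N : ℕ) (hN : N ≤ d) :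
    Finset.univ.filter (fun i : Fin d => (i : ℕ) < N)
      = Finset.univ.map (Fin.castLEEmb hN) := by
  ext i
  simp only [Finset.mem_filter, Finset.mem_univ, true_and, Finset.mem_map,
    Fin.castLEEmb_apply]
  constructor
  · intro h; exact ⟨⟨i, h⟩, by simp [Fin.ext_iff]⟩
  · rintro ⟨n, rfl⟩; simpa using n.isLt

lemma pod_card_sum (d N : ℕ) (hN : N ≤ d) (f : Fin d → ℝ) :
    ∑ i : Fin d, (if (i : ℕ) < N then f i else 0)
      = ∑ n : Fin N, f (Fin.castLE hN n) := by
  rw [← Finset.sum_filter, pod_filter_eq d N hN, Finset.sum_map]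
  rfl

lemma pod_aux_real (d N : ℕ) (hN : N ≤ d) (lam t : Fin d → ℝ) (hanti : Antitone lam)
    (hnn : ∀ i, 0 ≤ lam i) (ht0 : ∀ i, 0 ≤ t i) (ht1 : ∀ i, t i ≤ 1)
    (hts : ∑ i, t i ≤ N) :
    ∑ i, lam i * t i ≤ ∑ i : Fin d, (if (i : ℕ) < N then lam i else 0) := by
  set ls : ℝ := if h : N < d then lam ⟨N, h⟩ else 0 with hlsdef
  have hls_nn : 0 ≤ ls := by
    by_cases h : N < d
    · simp [hlsdef, h, hnn]
    · simp [hlsdef, h]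
  have hls_le : ∀ i : Fin d, (i : ℕ) < N → ls ≤ lam i := by
    intro i hi
    by_cases h : N < d
    · simp only [hlsdef, dif_pos h]
      exact hanti (by simp [Fin.le_def]; omega)
    · simpa [hlsdef, h] using hnn i
  have hle_ls : ∀ i : Fin d, N ≤ (i : ℕ) → lam i ≤ ls := by
    intro i hi
    have h : N < d := lt_of_le_of_lt hi i.isLt
    simp only [hlsdef, dif_pos h]
    exact hanti (by simp [Fin.le_def]; omega)
  have hcard : ∑ i : Fin d, (if (i : ℕ) < N then (1 : ℝ) else 0) = N := by
    rw [pod_card_sum d N hN]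
    simp
  have key : ∑ i : Fin d, lam i * t i - ∑ i : Fin d, (if (i : ℕ) < N then lam i else 0)
      = (∑ i : Fin d, (lam i - ls) * (t i - (if (i : ℕ) < N then 1 else 0)))
        + ls * ((∑ i, t i) - N) := by
    rw [← hcard, ← Finset.sum_sub_distrib, mul_sub, Finset.mul_sum, Finset.mul_sum,
      ← Finset.sum_sub_distrib, ← Finset.sum_add_distrib]
    refine Finset.sum_congr rfl fun i _ => ?_
    split_ifs <;> ring
  have h3 : ∑ i : Fin d, (lam i - ls) * (t i - (if (i : ℕ) < N then 1 else 0)) ≤ 0 := by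
    refine Finset.sum_nonpos fun i _ => ?_
    by_cases hi : (i : ℕ) < N
    · simp only [if_pos hi]
      exact mul_nonpos_of_nonneg_of_nonpos (by linarith [hls_le i hi]) (by linarith [ht1 i])
    · simp only [if_neg hi]
      exact mul_nonpos_of_nonpos_of_nonneg (by linarith [hle_ls i (by omega)]) (by linarith [ht0 i])
  have h2 : ls * ((∑ i, t i) - N) ≤ 0 :=
    mul_nonpos_of_nonneg_of_nonpos hls_nn (by linarith)
  linarith [key]


section
variable {H : Type*} [NormedAddCommGroup H] [InnerProductSpace ℝ H]

lemma pod_inner_sq_norm {ι : Type*} [Fintype ι] {v : ι → H} (hv : Orthonormal ℝ v)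
    (c : ι → ℝ) : ‖∑ i, c i • v i‖ ^ 2 = ∑ i, c i ^ 2 := by
  rw [← real_inner_self_eq_norm_sq, hv.inner_sum]
  simp [sq]

lemma pod_err_eq {ι : Type*} [Fintype ι] {ψ : ι → H} (hψ : Orthonormal ℝ ψ) (x : H) :
    ‖x - ∑ n, ⟪x, ψ n⟫ • ψ n‖ ^ 2 = ‖x‖ ^ 2 - ∑ n, ⟪x, ψ n⟫ ^ 2 := by
  have hxw : ⟪x, ∑ n, ⟪x, ψ n⟫ • ψ n⟫ = ∑ n, ⟪x, ψ n⟫ ^ 2 := by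
    rw [inner_sum]
    simp [real_inner_smul_right, sq]
  rw [norm_sub_sq_real, hxw, pod_inner_sq_norm hψ]
  ring

lemma pod_main {H : Type*} [NormedAddCommGroup H] [InnerProductSpace ℝ H]
    (M N d : ℕ) (hN : N ≤ d) (u : Fin M → H) (lam : Fin d → ℝ) (e : Fin d → H)
    (hanti : Antitone lam) (horth : Orthonormal ℝ e)
    (heig : ∀ i, ∑ m, ⟪u m, e i⟫ • u m = lam i • e i)
    (hexp : ∀ m, u m = ∑ i, ⟪u m, e i⟫ • e i) :
    Orthonormal ℝ (fun n : Fin N => e (Fin.castLE hN n)) ∧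
    (∀ ψ : Fin N → H, Orthonormal ℝ ψ →
        ∑ m, ‖u m - ∑ n, ⟪u m, e (Fin.castLE hN n)⟫ • e (Fin.castLE hN n)‖ ^ 2
          ≤ ∑ m, ‖u m - ∑ n, ⟪u m, ψ n⟫ • ψ n‖ ^ 2) ∧
    ∑ m, ‖u m - ∑ n, ⟪u m, e (Fin.castLE hN n)⟫ • e (Fin.castLE hN n)‖ ^ 2
      = ∑ i : Fin d, if N ≤ (i : ℕ) then lam i else 0 := by
  classical
  have hite := orthonormal_iff_ite.mp horth
  -- the correlation coefficients
  have hij : ∀ i j, ∑ m, ⟪u m, e i⟫ * ⟪u m, e j⟫ = if i = j then lam i else 0 := by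
    intro i j
    have : ∑ m, ⟪u m, e i⟫ * ⟪u m, e j⟫ = ⟪∑ m, ⟪u m, e i⟫ • u m, e j⟫ := by
      rw [sum_inner]
      simp [real_inner_smul_left]
    rw [this, heig i, real_inner_smul_left, hite i j]
    split_ifs <;> ring
  have hnn : ∀ i, 0 ≤ lam i := by
    intro i
    have := hij i i
    rw [if_pos rfl] at this
    rw [← this]
    exact Finset.sum_nonneg fun m _ => mul_self_nonneg _
  -- quadratic form value
  have hval : ∀ v : H, ∑ m, ⟪u m, v⟫ ^ 2 = ∑ i, lam i * ⟪v, e i⟫ ^ 2 := by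
    intro v
    have h1 : ∀ m, ⟪u m, v⟫ = ∑ i, ⟪u m, e i⟫ * ⟪e i, v⟫ := by
      intro m
      conv_lhs => rw [hexp m]
      rw [sum_inner]
      simp [real_inner_smul_left]
    calc ∑ m, ⟪u m, v⟫ ^ 2
        = ∑ m, ∑ i, ∑ j, (⟪u m, e i⟫ * ⟪e i, v⟫) * (⟪u m, e j⟫ * ⟪e j, v⟫) := by
          refine Finset.sum_congr rfl fun m _ => ?_
          rw [sq, h1 m, Finset.sum_mul_sum]
      _ = ∑ i, ∑ j, ∑ m, (⟪u m, e i⟫ * ⟪e i, v⟫) * (⟪u m, e j⟫ * ⟪e j, v⟫) := by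
          rw [Finset.sum_comm]
          exact Finset.sum_congr rfl fun i _ => by rw [Finset.sum_comm]
      _ = ∑ i, ∑ j, (⟪e i, v⟫ * ⟪e j, v⟫) * ∑ m, ⟪u m, e i⟫ * ⟪u m, e j⟫ := by
          refine Finset.sum_congr rfl fun i _ => Finset.sum_congr rfl fun j _ => ?_
          rw [Finset.mul_sum]
          exact Finset.sum_congr rfl fun m _ => by ring
      _ = ∑ i, lam i * ⟪v, e i⟫ ^ 2 := by
          refine Finset.sum_congr rfl fun i _ => ?_
          simp_rw [hij i, mul_ite, mul_zero]
          rw [Finset.sum_ite_eq _ i]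
          simp [sq, real_inner_comm]
          ring
  -- Parseval
  have hpars : ∀ m, ‖u m‖ ^ 2 = ∑ i, ⟪u m, e i⟫ ^ 2 := by
    intro m
    conv_lhs => rw [hexp m]
    exact pod_inner_sq_norm horth _
  have htrace : ∑ m, ‖u m‖ ^ 2 = ∑ i, lam i := by
    simp_rw [hpars]
    rw [Finset.sum_comm]
    refine Finset.sum_congr rfl fun i _ => ?_
    have := hij i i
    rw [if_pos rfl] at this
    rw [← this]
    exact Finset.sum_congr rfl fun m _ => sq ⟪u m, e i⟫
  -- total error formula
  have hT : ∀ ψ : Fin N → H, Orthonormal ℝ ψ →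
      ∑ m, ‖u m - ∑ n, ⟪u m, ψ n⟫ • ψ n‖ ^ 2
        = (∑ i, lam i) - ∑ n, ∑ m, ⟪u m, ψ n⟫ ^ 2 := by
    intro ψ hψ
    simp_rw [pod_err_eq hψ]
    rw [Finset.sum_sub_distrib, htrace, Finset.sum_comm]
  -- orthonormality of the truncated family
  have hφorth : Orthonormal ℝ (fun n : Fin N => e (Fin.castLE hN n)) :=
    horth.comp _ (Fin.castLE_injective hN)
  -- value at φ
  have hφval : ∑ n : Fin N, ∑ m, ⟪u m, e (Fin.castLE hN n)⟫ ^ 2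
      = ∑ i : Fin d, (if (i : ℕ) < N then lam i else 0) := by
    rw [pod_card_sum d N hN]
    refine Finset.sum_congr rfl fun n _ => ?_
    have := hij (Fin.castLE hN n) (Fin.castLE hN n)
    rw [if_pos rfl] at this
    rw [← this]
    exact Finset.sum_congr rfl fun m _ => sq ⟪u m, e (Fin.castLE hN n)⟫
  refine ⟨hφorth, ?_, ?_⟩
  · intro ψ hψ
    rw [hT _ hφorth, hT _ hψ, hφval]
    have hbound : ∑ n : Fin N, ∑ m, ⟪u m, ψ n⟫ ^ 2
        ≤ ∑ i : Fin d, (if (i : ℕ) < N then lam i else 0) := by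
      have hswap : ∑ n : Fin N, ∑ m, ⟪u m, ψ n⟫ ^ 2
          = ∑ i, lam i * ∑ n : Fin N, ⟪ψ n, e i⟫ ^ 2 := by
        calc ∑ n : Fin N, ∑ m, ⟪u m, ψ n⟫ ^ 2
            = ∑ n : Fin N, ∑ i, lam i * ⟪ψ n, e i⟫ ^ 2 :=
              Finset.sum_congr rfl fun n _ => hval (ψ n)
          _ = ∑ i, ∑ n : Fin N, lam i * ⟪ψ n, e i⟫ ^ 2 := by rw [Finset.sum_comm]
          _ = ∑ i, lam i * ∑ n : Fin N, ⟪ψ n, e i⟫ ^ 2 := by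
              simp_rw [Finset.mul_sum]
      rw [hswap]
      refine pod_aux_real d N hN lam _ hanti hnn (fun i => Finset.sum_nonneg fun n _ => sq_nonneg _) ?_ ?_
      · intro i
        have := hψ.sum_inner_products_le (e i) (s := Finset.univ)
        have hn1 : ‖e i‖ = 1 := horth.1 i
        simpa [Real.norm_eq_abs, sq_abs, hn1] using this
      · calc ∑ i, ∑ n : Fin N, ⟪ψ n, e i⟫ ^ 2
            = ∑ n : Fin N, ∑ i, ⟪ψ n, e i⟫ ^ 2 := by rw [Finset.sum_comm]
          _ ≤ ∑ _n : Fin N, (1 : ℝ) := by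
              refine Finset.sum_le_sum fun n _ => ?_
              have := horth.sum_inner_products_le (ψ n) (s := Finset.univ)
              have hn1 : ‖ψ n‖ = 1 := hψ.1 n
              simp only [Real.norm_eq_abs, sq_abs, hn1, one_pow] at this
              calc ∑ i, ⟪ψ n, e i⟫ ^ 2 = ∑ i, ⟪e i, ψ n⟫ ^ 2 := by
                    simp_rw [real_inner_comm]
                _ ≤ 1 := this
          _ = N := by simp
    linarith
  · rw [hT _ hφorth, hφval, ← Finset.sum_sub_distrib]
    refine Finset.sum_congr rfl fun i _ => ?_
    split_ifs with h1 h2 h2 <;> first | omega | ring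
end


/-- POD optimality: there exists an orthonormal family of size N minimizing the total
snapshot reconstruction error, and the minimum equals the sum of the smallest
eigenvalues (beyond the N leading ones, the remaining ones counted with multiplicity,
the rest being zero) of the correlation operator C v = Σ_m ⟪u_m, v⟫ u_m restricted to
span{u₁,…,u_M}. -/
theorem stmt5 {H : Type*} [NormedAddCommGroup H] [InnerProductSpace ℝ H] [CompleteSpace H]
    (M N : ℕ) (u : Fin M → H)
    (hN : N ≤ Module.finrank ℝ (Submodule.span ℝ (Set.range u))) :
    ∃ φ : Fin N → H, Orthonormal ℝ φ ∧
      (∀ ψ : Fin N → H, Orthonormal ℝ ψ →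
        ∑ m, ‖u m - ∑ n, ⟪u m, φ n⟫ • φ n‖ ^ 2
          ≤ ∑ m, ‖u m - ∑ n, ⟪u m, ψ n⟫ • ψ n‖ ^ 2) ∧
      ∃ (lam : Fin (Module.finrank ℝ (Submodule.span ℝ (Set.range u))) → ℝ)
        (e : Fin (Module.finrank ℝ (Submodule.span ℝ (Set.range u))) → H),
        Antitone lam ∧ Orthonormal ℝ e ∧
        (∀ i, e i ∈ Submodule.span ℝ (Set.range u) ∧
          (∑ m, ⟪u m, e i⟫ • u m) = lam i • e i) ∧
        ∑ m, ‖u m - ∑ n, ⟪u m, φ n⟫ • φ n‖ ^ 2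
          = ∑ i : Fin (Module.finrank ℝ (Submodule.span ℝ (Set.range u))), if N ≤ (i : ℕ) then lam i else 0 := by
  classical
  set V : Submodule ℝ H := Submodule.span ℝ (Set.range u) with hV
  haveI : FiniteDimensional ℝ V := Module.Finite.span_of_finite ℝ (Set.finite_range u)
  set d : ℕ := Module.finrank ℝ V with hd
  have hu' : ∀ m, u m ∈ V := fun m => Submodule.subset_span (Set.mem_range_self m)
  set u' : Fin M → V := fun m => ⟨u m, hu' m⟩ with hu'def
  set T : V →ₗ[ℝ] V := ∑ m, ((innerSL ℝ (u' m)).toLinearMap).smulRight (u' m) with hT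
  have hTapp : ∀ v : V, T v = ∑ m, ⟪u' m, v⟫ • u' m := by
    intro v
    simp [hT, LinearMap.sum_apply]
  have hsymm : T.IsSymmetric := by
    intro x y
    simp_rw [hTapp, sum_inner, inner_sum, real_inner_smul_left, real_inner_smul_right]
    refine Finset.sum_congr rfl fun m _ => ?_
    rw [real_inner_comm x (u' m)]
    ring
  set b := hsymm.eigenvectorBasis rfl with hb
  set mu := hsymm.eigenvalues rfl with hmu
  have hbeig : ∀ i, T (b i) = mu i • b i := fun i => hsymm.apply_eigenvectorBasis rfl i
  set sigma := Tuple.sort mu with hsigma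
  set pi : Fin d ≃ Fin d := Fin.revPerm.trans sigma with hpi
  set lam : Fin d → ℝ := fun i => mu (pi i) with hlam
  set evec : Fin d → H := fun i => ((b (pi i) : V) : H) with hevec
  have hanti : Antitone lam := by
    intro i j hij_le
    exact Tuple.monotone_sort mu (Fin.rev_le_rev.mpr hij_le)
  have horth : Orthonormal ℝ evec :=
    (b.orthonormal.comp pi pi.injective).comp_linearIsometry V.subtypeₗᵢ
  have hmem : ∀ i, evec i ∈ V := fun i => (b (pi i)).2
  have hinner : ∀ (m : Fin M) (x : V), ⟪u' m, x⟫ = ⟪u m, (x : H)⟫ := fun m x => rfl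
  have heig : ∀ i, ∑ m, ⟪u m, evec i⟫ • u m = lam i • evec i := by
    intro i
    have h1 := hbeig (pi i)
    rw [hTapp] at h1
    have h2 := congrArg (Subtype.val : V → H) h1
    push_cast at h2
    simpa [hevec, hlam, hinner] using h2
  have hexp : ∀ m, u m = ∑ i, ⟪u m, evec i⟫ • evec i := by
    intro m
    set B : OrthonormalBasis (Fin d) ℝ V := b.reindex pi.symm with hB
    have hBi : ∀ i, B i = b (pi i) := by
      intro i
      rw [hB, OrthonormalBasis.reindex_apply]
      simp
    have h1 : ∑ i, ⟪B i, u' m⟫ • B i = u' m := B.sum_repr' (u' m)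
    have h2 := congrArg (Subtype.val : V → H) h1
    push_cast at h2
    have h3 : ∑ i, ⟪u m, evec i⟫ • evec i
        = ∑ i : Fin d, ⟪B i, u' m⟫ • ((B i : V) : H) := by
      refine Finset.sum_congr rfl fun i _ => ?_
      rw [hBi i]
      congr 1
      rw [Submodule.coe_inner]
      exact real_inner_comm _ _
    rw [h3, h2]
  obtain ⟨h1, h2, h3⟩ := pod_main M N d hN u lam evec hanti horth heig hexp
  exact ⟨_, h1, h2, lam, evec, hanti, horth, fun i => ⟨hmem i, heig i⟩, h3⟩
end
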